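/- (Preservation of sparsity.) Let D and D̃ be dictionaries with ‖D − D̃‖_{1,2} ≤ λ, and suppose M_k(D, x) > (1 + ‖x‖_2/λ) ‖x‖_2 ‖D − D̃‖_{1,2} + √( 2 (3‖x‖_2² + 9‖x‖_2 + 2) ‖x‖_2² ‖D − D̃‖_{1,2} / λ ). Then for any minimizers φ_D(x) and φ_{D̃}(x) of the respective LASSO objectives, the difference is k-sparse: ‖φ_D(x) − φ_{D̃}(x)‖_0 ≤ k. -/

import Mathlib

/-!
Write `r = x - D a` and `r̃ = x - D̃ ã` for the residuals. The optimality conditions of the LASSO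
give `|⟨d_j, r⟩| ≤ λ`, with equality wherever `a_j ≠ 0`, and likewise for `D̃`. With `B` the
left-hand side of the margin hypothesis, that hypothesis provides `m - k` atoms with
`λ - |⟨d_j, r⟩| > B`; they are off the support of `a`, and they stay off the support of `ã` as soon
as `|⟨d̃_j, r̃⟩ - ⟨d_j, r⟩| ≤ B`. Comparing with `z = 0` gives `‖r‖ ≤ ‖x‖` and `‖a‖₁ ≤ ‖x‖² / 2λ`,
so the two LASSO objectives differ by at most `(4‖x‖ + ‖x‖²) ‖x‖² ‖D - D̃‖₁,₂ / 8λ` at `a` and at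
`ã`. As the objective is `1`-strongly convex in `Dz`, this bounds `‖D (a - ã)‖`, hence `‖r̃ - r‖`.
-/

open Finset Matrix

noncomputable def norm2 {ι : Type*} [Fintype ι] (v : ι → ℝ) : ℝ :=
  Real.sqrt (∑ i, v i ^ 2)

noncomputable def norm1 {ι : Type*} [Fintype ι] (v : ι → ℝ) : ℝ :=
  ∑ i, |v i|

noncomputable def norm0 {ι : Type*} (v : ι → ℝ) : ℕ :=
  Set.ncard {i | v i ≠ 0}

noncomputable def dot {ι : Type*} [Fintype ι] (u v : ι → ℝ) : ℝ :=
  ∑ i, u i * v i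

def col {d m : ℕ} (D : Matrix (Fin d) (Fin m) ℝ) (i : Fin m) : Fin d → ℝ :=
  fun r => D r i

def IsDictionary {d m : ℕ} (D : Matrix (Fin d) (Fin m) ℝ) : Prop :=
  ∀ i, norm2 (_root_.col D i) = 1

noncomputable def norm12 {d m : ℕ} (E : Matrix (Fin d) (Fin m) ℝ) : ℝ :=
  ⨆ i : Fin m, norm2 (_root_.col E i)

noncomputable def lassoObj {d m : ℕ} (lam : ℝ) (D : Matrix (Fin d) (Fin m) ℝ)
    (x : Fin d → ℝ) (z : Fin m → ℝ) : ℝ :=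
  (1/2) * (norm2 (x - D.mulVec z))^2 + lam * norm1 z

def IsLassoMin {d m : ℕ} (lam : ℝ) (D : Matrix (Fin d) (Fin m) ℝ)
    (x : Fin d → ℝ) (a : Fin m → ℝ) : Prop :=
  ∀ z, lassoObj lam D x a ≤ lassoObj lam D x z

def Incoherent {d m : ℕ} (mu : ℝ) (D : Matrix (Fin d) (Fin m) ℝ) : Prop :=
  ∀ i j, i ≠ j → |dot (_root_.col D i) (_root_.col D j)| ≤ mu / Real.sqrt d

noncomputable def kMargin {d m : ℕ} (lam : ℝ) (k : ℕ) (D : Matrix (Fin d) (Fin m) ℝ)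
    (x : Fin d → ℝ) (a : Fin m → ℝ) : ℝ :=
  ⨆ I : {I : Finset (Fin m) // I.card = m - k},
    ⨅ j : {j : Fin m // j ∈ I.1}, (lam - |dot (_root_.col D j.1) (x - D.mulVec a)|)

open WithLp Filter Topology

section Euclidean

variable {ι : Type*} [Fintype ι]

lemma norm2_eq_norm (v : ι → ℝ) : norm2 v = ‖toLp 2 v‖ := by
  simp [norm2, EuclideanSpace.norm_eq, sq_abs]

lemma dot_eq_inner (u v : ι → ℝ) : dot u v = inner ℝ (toLp 2 u) (toLp 2 v) := by
  simp [dot, PiLp.inner_apply, mul_comm]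

lemma norm2_nonneg (v : ι → ℝ) : 0 ≤ norm2 v := Real.sqrt_nonneg _

lemma norm2_neg (v : ι → ℝ) : norm2 (-v) = norm2 v := by
  simp [norm2_eq_norm]

lemma norm2_add_le (u v : ι → ℝ) : norm2 (u + v) ≤ norm2 u + norm2 v := by
  simpa [norm2_eq_norm] using norm_add_le (toLp 2 u) (toLp 2 v)

lemma abs_dot_le_norm2_mul_norm2 (u v : ι → ℝ) : |dot u v| ≤ norm2 u * norm2 v := by
  simpa [norm2_eq_norm, dot_eq_inner] using abs_real_inner_le_norm (toLp 2 u) (toLp 2 v)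

lemma norm1_nonneg (v : ι → ℝ) : 0 ≤ norm1 v := Finset.sum_nonneg fun _ _ => abs_nonneg _

lemma norm1_add_single [DecidableEq ι] (z : ι → ℝ) (j : ι) (t : ℝ) :
    norm1 (z + Pi.single j t) + |z j| = norm1 z + |z j + t| := by
  simp only [norm1, ← Finset.add_sum_erase _ _ (Finset.mem_univ j)]
  have hrest :
      ∑ i ∈ univ.erase j, |(z + Pi.single j t : ι → ℝ) i| = ∑ i ∈ univ.erase j, |z i| :=
    Finset.sum_congr rfl fun i hi => by
      rw [Pi.add_apply, Pi.single_eq_of_ne (Finset.ne_of_mem_erase hi), add_zero]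
  rw [hrest, Pi.add_apply, Pi.single_eq_same]
  ring

lemma norm2_sub_smul_sq (u g : ι → ℝ) (t : ℝ) :
    norm2 (u - t • g) ^ 2 = norm2 u ^ 2 - 2 * t * dot g u + t ^ 2 * norm2 g ^ 2 := by
  simp only [norm2_eq_norm, dot_eq_inner, toLp_sub, toLp_smul, norm_sub_sq_real, norm_smul,
    inner_smul_right, real_inner_comm, Real.norm_eq_abs, mul_pow, sq_abs]
  ring

lemma norm1_midpoint_le (a b : ι → ℝ) :
    norm1 ((1 / 2 : ℝ) • (a + b)) ≤ (norm1 a + norm1 b) / 2 := by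
  simp only [norm1, ← Finset.sum_add_distrib, Finset.sum_div]
  refine Finset.sum_le_sum fun i _ => ?_
  rw [Pi.smul_apply, Pi.add_apply, smul_eq_mul, abs_mul, abs_of_pos one_half_pos]
  linarith [abs_add_le (a i) (b i)]

lemma norm0_le_card_sub_card [DecidableEq ι] {v : ι → ℝ} (I : Finset ι)
    (h : ∀ i ∈ I, v i = 0) : norm0 v ≤ Fintype.card ι - I.card := by
  have hsupp : {i | v i ≠ 0} ⊆ ↑Iᶜ := fun i hi => by
    simpa using mt (h i) hi
  calc norm0 v ≤ (↑Iᶜ : Set ι).ncard := Set.ncard_le_ncard hsupp (Finset.finite_toSet _)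
    _ = Fintype.card ι - I.card := by rw [Set.ncard_coe_finset, Finset.card_compl]

end Euclidean

section Columns

variable {d m : ℕ}

lemma mulVec_eq_sum_smul_col (E : Matrix (Fin d) (Fin m) ℝ) (z : Fin m → ℝ) :
    E *ᵥ z = ∑ i, z i • _root_.col E i := by
  ext r
  simp [Matrix.mulVec, dotProduct, _root_.col, mul_comm]

lemma norm2_col_le_norm12 (E : Matrix (Fin d) (Fin m) ℝ) (i : Fin m) :
    norm2 (_root_.col E i) ≤ norm12 E :=
  le_ciSup (f := fun i => norm2 (_root_.col E i)) (Set.finite_range _).bddAbove i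

lemma norm12_nonneg (E : Matrix (Fin d) (Fin m) ℝ) : 0 ≤ norm12 E :=
  Real.iSup_nonneg fun _ => norm2_nonneg _

lemma norm12_sub_comm (D Dt : Matrix (Fin d) (Fin m) ℝ) : norm12 (D - Dt) = norm12 (Dt - D) := by
  have hcol (i : Fin m) : _root_.col (Dt - D) i = -_root_.col (D - Dt) i := by
    ext r; simp [_root_.col]
  simp only [norm12, hcol, norm2_neg]

lemma norm2_mulVec_le (E : Matrix (Fin d) (Fin m) ℝ) (z : Fin m → ℝ) :
    norm2 (E *ᵥ z) ≤ norm12 E * norm1 z := by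
  simp only [mulVec_eq_sum_smul_col, norm2_eq_norm, toLp_sum, toLp_smul]
  calc ‖∑ i, z i • toLp 2 (_root_.col E i)‖ ≤ ∑ i, |z i| * norm12 E := by
        refine (norm_sum_le _ _).trans (Finset.sum_le_sum fun i _ => ?_)
        rw [norm_smul, Real.norm_eq_abs, ← norm2_eq_norm]
        exact mul_le_mul_of_nonneg_left (norm2_col_le_norm12 E i) (abs_nonneg _)
    _ = norm12 E * norm1 z := by rw [← Finset.sum_mul, norm1, mul_comm]

end Columns

lemma le_of_eventually_le_add_mul {u v G : ℝ}
    (h : ∀ᶠ s in 𝓝[>] (0 : ℝ), u ≤ v + G * s) : u ≤ v := by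
  have hlim : Tendsto (fun s => v + G * s) (𝓝[>] 0) (𝓝 v) := by
    have : Continuous fun s : ℝ => v + G * s := by fun_prop
    simpa using (this.tendsto 0).mono_left nhdsWithin_le_nhds
  exact ge_of_tendsto hlim h

/-- `t = 0` minimizes the LASSO objective along a coordinate line, with `G = ‖d_j‖²`,
`c = ⟨d_j, x - D z⟩` and `a = z_j` (see `lassoObj_add_single`). -/
def CoordLassoMin (G c lam a : ℝ) : Prop :=
  ∀ t, lam * |a| ≤ G * t ^ 2 / 2 - c * t + lam * |a + t|

namespace CoordLassoMin

variable {G c lam a : ℝ}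

lemma neg (h : CoordLassoMin G c lam a) : CoordLassoMin G (-c) lam (-a) := fun t => by
  have := h (-t)
  rw [abs_neg, show -a + t = -(a + -t) by ring, abs_neg]
  linarith [show (-t) ^ 2 = t ^ 2 by ring]

lemma le (hlam : 0 ≤ lam) (h : CoordLassoMin G c lam a) : c ≤ lam := by
  refine le_of_eventually_le_add_mul (G := G / 2) ?_
  filter_upwards [self_mem_nhdsWithin] with s (hs : 0 < s)
  have hmin := h s
  have htri : |a + s| ≤ |a| + s := (abs_add_le a s).trans_eq (by rw [abs_of_pos hs])
  refine le_of_mul_le_mul_right ?_ hs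
  nlinarith [mul_le_mul_of_nonneg_left htri hlam]

lemma le_of_pos (ha : 0 < a) (h : CoordLassoMin G c lam a) : lam ≤ c := by
  refine le_of_eventually_le_add_mul (G := G / 2) ?_
  filter_upwards [Ioo_mem_nhdsGT ha] with s ⟨hs, hsa⟩
  have hmin := h (-s)
  rw [← sub_eq_add_neg, abs_of_pos (sub_pos.2 hsa), abs_of_pos ha] at hmin
  refine le_of_mul_le_mul_right ?_ hs
  nlinarith

lemma abs_le (hlam : 0 ≤ lam) (h : CoordLassoMin G c lam a) : |c| ≤ lam :=
  _root_.abs_le.2 ⟨by linarith [h.neg.le hlam], h.le hlam⟩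

lemma abs_eq (hlam : 0 ≤ lam) (ha : a ≠ 0) (h : CoordLassoMin G c lam a) : |c| = lam := by
  refine le_antisymm (h.abs_le hlam) ?_
  rcases ha.lt_or_gt with hneg | hpos
  · exact (h.neg.le_of_pos (neg_pos.2 hneg)).trans (neg_le_abs c)
  · exact (h.le_of_pos hpos).trans (le_abs_self c)

end CoordLassoMin

section Lasso

variable {d m : ℕ} {lam : ℝ} {D Dt : Matrix (Fin d) (Fin m) ℝ} {x : Fin d → ℝ}
  {a at' : Fin m → ℝ}

lemma lassoObj_add_single (lam : ℝ) (D : Matrix (Fin d) (Fin m) ℝ) (x : Fin d → ℝ)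
    (z : Fin m → ℝ) (j : Fin m) (t : ℝ) :
    lassoObj lam D x (z + Pi.single j t) + lam * |z j| = lassoObj lam D x z +
      (norm2 (_root_.col D j) ^ 2 * t ^ 2 / 2 - dot (_root_.col D j) (x - D *ᵥ z) * t
        + lam * |z j + t|) := by
  have hres : x - D *ᵥ (z + Pi.single j t) = (x - D *ᵥ z) - t • _root_.col D j := by
    ext r
    simp only [Matrix.mulVec_add, Matrix.mulVec_single, op_smul_eq_smul, Pi.sub_apply,
      Pi.add_apply, Pi.smul_apply, Matrix.col_apply, smul_eq_mul, _root_.col]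
    ring
  have hl1 := norm1_add_single z j t
  simp only [lassoObj, hres, norm2_sub_smul_sq]
  linear_combination lam * hl1

lemma IsLassoMin.coordLassoMin (hmin : IsLassoMin lam D x a) (j : Fin m) :
    CoordLassoMin (norm2 (_root_.col D j) ^ 2) (dot (_root_.col D j) (x - D *ᵥ a)) lam (a j) :=
  fun t => by linarith [hmin (a + Pi.single j t), lassoObj_add_single lam D x a j t]

lemma IsLassoMin.abs_dot_col_eq (hlam : 0 ≤ lam) (hmin : IsLassoMin lam D x a) {j : Fin m}
    (hj : a j ≠ 0) : |dot (_root_.col D j) (x - D *ᵥ a)| = lam :=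
  (hmin.coordLassoMin j).abs_eq hlam hj

lemma IsLassoMin.lassoObj_le (hmin : IsLassoMin lam D x a) :
    lassoObj lam D x a ≤ norm2 x ^ 2 / 2 :=
  (hmin 0).trans_eq (by simp [lassoObj, norm1, div_eq_inv_mul])

lemma IsLassoMin.norm2_residual_le (hlam : 0 ≤ lam) (hmin : IsLassoMin lam D x a) :
    norm2 (x - D *ᵥ a) ≤ norm2 x := by
  have h := hmin.lassoObj_le
  rw [lassoObj] at h
  nlinarith [norm2_nonneg (x - D *ᵥ a), norm2_nonneg x, mul_nonneg hlam (norm1_nonneg a)]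

lemma IsLassoMin.norm1_le (hlam : 0 < lam) (hmin : IsLassoMin lam D x a) :
    norm1 a ≤ norm2 x ^ 2 / (2 * lam) := by
  have h := hmin.lassoObj_le
  rw [lassoObj] at h
  rw [le_div_iff₀ (by positivity)]
  nlinarith [sq_nonneg (norm2 (x - D *ᵥ a))]

lemma lassoObj_sub_lassoObj_le (lam : ℝ) (D Dt : Matrix (Fin d) (Fin m) ℝ) (x : Fin d → ℝ)
    (z : Fin m → ℝ) :
    lassoObj lam Dt x z - lassoObj lam D x z ≤
      (2 * norm2 (x - D *ᵥ z) + norm12 (D - Dt) * norm1 z) * (norm12 (D - Dt) * norm1 z) / 2 := by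
  have hres : norm2 (x - Dt *ᵥ z) ≤ norm2 (x - D *ᵥ z) + norm12 (D - Dt) * norm1 z := by
    have hsplit : x - Dt *ᵥ z = (x - D *ᵥ z) + (D - Dt) *ᵥ z := by
      rw [Matrix.sub_mulVec]; abel
    rw [hsplit]
    exact (norm2_add_le _ _).trans (add_le_add le_rfl (norm2_mulVec_le _ _))
  have hsq := pow_le_pow_left₀ (norm2_nonneg _) hres 2
  simp only [lassoObj]
  linarith

lemma IsLassoMin.lassoObj_sub_lassoObj_le (hlam : 0 < lam) (hclose : norm12 (D - Dt) ≤ lam)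
    (hmin : IsLassoMin lam D x a) :
    lassoObj lam Dt x a - lassoObj lam D x a ≤
      (4 * norm2 x + norm2 x ^ 2) * norm2 x ^ 2 * norm12 (D - Dt) / (8 * lam) := by
  set X := norm2 x
  set ε := norm12 (D - Dt)
  have hX : 0 ≤ X := norm2_nonneg x
  have hε : 0 ≤ ε := norm12_nonneg _
  have hη : ε * norm1 a ≤ ε * (X ^ 2 / (2 * lam)) :=
    mul_le_mul_of_nonneg_left (hmin.norm1_le hlam) hε
  have hηX : ε * (X ^ 2 / (2 * lam)) ≤ X ^ 2 / 2 := by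
    rw [← mul_div_assoc, div_le_div_iff₀ (by positivity) two_pos]
    nlinarith [sq_nonneg X]
  calc lassoObj lam Dt x a - lassoObj lam D x a
      ≤ (2 * norm2 (x - D *ᵥ a) + ε * norm1 a) * (ε * norm1 a) / 2 :=
        _root_.lassoObj_sub_lassoObj_le lam D Dt x a
    _ ≤ (2 * X + X ^ 2 / 2) * (ε * (X ^ 2 / (2 * lam))) / 2 := by
        have := hmin.norm2_residual_le hlam.le
        have := mul_nonneg hε (norm1_nonneg a)
        gcongr
        linarith
    _ = (4 * X + X ^ 2) * X ^ 2 * ε / (8 * lam) := by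
        field_simp
        ring

lemma lassoObj_midpoint_le (hlam : 0 ≤ lam) (D : Matrix (Fin d) (Fin m) ℝ) (x : Fin d → ℝ)
    (a b : Fin m → ℝ) :
    lassoObj lam D x ((1 / 2 : ℝ) • (a + b)) + norm2 (D *ᵥ (a - b)) ^ 2 / 8 ≤
      (lassoObj lam D x a + lassoObj lam D x b) / 2 := by
  have hmid :
      x - D *ᵥ ((1 / 2 : ℝ) • (a + b)) = (1 / 2 : ℝ) • ((x - D *ᵥ a) + (x - D *ᵥ b)) := by
    rw [Matrix.mulVec_smul, Matrix.mulVec_add]; module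
  have hdiff : D *ᵥ (a - b) = (x - D *ᵥ b) - (x - D *ᵥ a) := by
    rw [Matrix.mulVec_sub]; abel
  have hl1 := mul_le_mul_of_nonneg_left (norm1_midpoint_le a b) hlam
  rw [lassoObj, lassoObj, lassoObj, hmid, hdiff]
  generalize x - D *ᵥ a = u
  generalize x - D *ᵥ b = w
  have hpar := parallelogram_law_with_norm ℝ (toLp 2 w) (toLp 2 u)
  simp only [norm2_eq_norm, toLp_smul, toLp_add, toLp_sub, norm_smul,
    Real.norm_eq_abs, abs_of_pos (one_half_pos (α := ℝ)), mul_pow, add_comm (toLp 2 u)]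
  linarith

lemma IsLassoMin.norm2_mulVec_sub_sq_le_lassoObj_sub (hlam : 0 ≤ lam)
    (hmin : IsLassoMin lam D x a) (b : Fin m → ℝ) :
    norm2 (D *ᵥ (a - b)) ^ 2 ≤ 4 * (lassoObj lam D x b - lassoObj lam D x a) := by
  linarith [lassoObj_midpoint_le hlam D x a b, hmin ((1 / 2 : ℝ) • (a + b))]

lemma norm2_mulVec_sub_sq_le_of_isLassoMin (hlam : 0 < lam) (hclose : norm12 (D - Dt) ≤ lam)
    (ha : IsLassoMin lam D x a) (hat : IsLassoMin lam Dt x at') :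
    norm2 (D *ᵥ (a - at')) ^ 2 ≤
      (4 * norm2 x + norm2 x ^ 2) * norm2 x ^ 2 * norm12 (D - Dt) / lam := by
  have hconv := ha.norm2_mulVec_sub_sq_le_lassoObj_sub hlam.le at'
  have hpert := ha.lassoObj_sub_lassoObj_le hlam hclose
  have hpert' := hat.lassoObj_sub_lassoObj_le hlam (norm12_sub_comm D Dt ▸ hclose)
  rw [← norm12_sub_comm] at hpert'
  calc norm2 (D *ᵥ (a - at')) ^ 2
      ≤ 8 * ((4 * norm2 x + norm2 x ^ 2) * norm2 x ^ 2 * norm12 (D - Dt) / (8 * lam)) := by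
        linarith [hat a]
    _ = (4 * norm2 x + norm2 x ^ 2) * norm2 x ^ 2 * norm12 (D - Dt) / lam := by
        field_simp

lemma abs_dot_col_residual_sub_le (hlam : 0 < lam) (hDt : IsDictionary Dt)
    (hclose : norm12 (D - Dt) ≤ lam) (ha : IsLassoMin lam D x a) (hat : IsLassoMin lam Dt x at')
    (j : Fin m) :
    |dot (_root_.col Dt j) (x - Dt *ᵥ at') - dot (_root_.col D j) (x - D *ᵥ a)| ≤
      (1 + norm2 x / lam) * norm2 x * norm12 (D - Dt) +
        √(2 * (3 * norm2 x ^ 2 + 9 * norm2 x + 2) * norm2 x ^ 2 * norm12 (D - Dt) / lam) := by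
  set X := norm2 x
  set ε := norm12 (D - Dt)
  have hX : 0 ≤ X := norm2_nonneg x
  have hε : 0 ≤ ε := norm12_nonneg _
  have hsplit : dot (_root_.col Dt j) (x - Dt *ᵥ at') - dot (_root_.col D j) (x - D *ᵥ a) =
      dot (_root_.col (Dt - D) j) (x - D *ᵥ a) +
        dot (_root_.col Dt j) (D *ᵥ (a - at') + (D - Dt) *ᵥ at') := by
    simp only [dot, _root_.col, Matrix.mulVec_sub, Matrix.sub_mulVec, Matrix.sub_apply,
      Pi.sub_apply, Pi.add_apply, ← Finset.sum_add_distrib, ← Finset.sum_sub_distrib]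
    exact Finset.sum_congr rfl fun _ _ => by ring
  have hcol : |dot (_root_.col (Dt - D) j) (x - D *ᵥ a)| ≤ ε * X := by
    refine (abs_dot_le_norm2_mul_norm2 _ _).trans (mul_le_mul ?_ (ha.norm2_residual_le hlam.le)
      (norm2_nonneg _) hε)
    exact (norm2_col_le_norm12 _ j).trans_eq (norm12_sub_comm D Dt).symm
  have hS : norm2 (D *ᵥ (a - at')) ≤ √((4 * X + X ^ 2) * X ^ 2 * ε / lam) :=
    (le_abs_self _).trans <|
      Real.abs_le_sqrt (norm2_mulVec_sub_sq_le_of_isLassoMin hlam hclose ha hat)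
  have hE : norm2 ((D - Dt) *ᵥ at') ≤ ε * (X ^ 2 / (2 * lam)) :=
    (norm2_mulVec_le _ _).trans (mul_le_mul_of_nonneg_left (hat.norm1_le hlam) hε)
  have hres : |dot (_root_.col Dt j) (D *ᵥ (a - at') + (D - Dt) *ᵥ at')| ≤
      √((4 * X + X ^ 2) * X ^ 2 * ε / lam) + ε * (X ^ 2 / (2 * lam)) := by
    refine (abs_dot_le_norm2_mul_norm2 _ _).trans ?_
    rw [hDt j, one_mul]
    exact (norm2_add_le _ _).trans (add_le_add hS hE)
  have hsqrt : √((4 * X + X ^ 2) * X ^ 2 * ε / lam) ≤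
      √(2 * (3 * X ^ 2 + 9 * X + 2) * X ^ 2 * ε / lam) := by
    gcongr
    nlinarith
  have hlin : ε * X + ε * (X ^ 2 / (2 * lam)) ≤ (1 + X / lam) * X * ε := by
    have : 0 ≤ ε * X ^ 2 / (2 * lam) := by positivity
    have : (1 + X / lam) * X * ε = ε * X + ε * X ^ 2 / (2 * lam) + ε * X ^ 2 / (2 * lam) := by
      field_simp; ring
    linarith [mul_div_assoc ε (X ^ 2) (2 * lam)]
  rw [hsplit]
  linarith [abs_add_le (dot (_root_.col (Dt - D) j) (x - D *ᵥ a))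
    (dot (_root_.col Dt j) (D *ᵥ (a - at') + (D - Dt) *ᵥ at'))]

lemma exists_card_eq_forall_lt_of_lt_kMargin {B : ℝ} {k : ℕ} (h : B < kMargin lam k D x a) :
    ∃ I : Finset (Fin m), I.card = m - k ∧
      ∀ j ∈ I, B < lam - |dot (_root_.col D j) (x - D *ᵥ a)| := by
  have : Nonempty {I : Finset (Fin m) // I.card = m - k} := by
    obtain ⟨I, -, hI⟩ :=
      Finset.exists_subset_card_eq (s := (univ : Finset (Fin m))) (n := m - k) (by simp)
    exact ⟨⟨I, hI⟩⟩
  obtain ⟨⟨I, hI⟩, hlt⟩ := exists_lt_of_lt_ciSup h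
  refine ⟨I, hI, fun j hj => hlt.trans_le ?_⟩
  exact ciInf_le (Set.finite_range _).bddBelow (⟨j, hj⟩ : {j // j ∈ I})

end Lasso

theorem preservation_of_sparsity_general {d m : ℕ} (lam : ℝ) (hlam : 0 < lam) (k : ℕ)
    (D Dt : Matrix (Fin d) (Fin m) ℝ) (hDt : IsDictionary Dt)
    (hclose : norm12 (D - Dt) ≤ lam)
    (x : Fin d → ℝ)
    (a at' : Fin m → ℝ) (ha : IsLassoMin lam D x a) (hat : IsLassoMin lam Dt x at')
    (hmargin : (1 + norm2 x / lam) * norm2 x * norm12 (D - Dt)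
        + Real.sqrt (2 * (3 * (norm2 x)^2 + 9 * norm2 x + 2) * (norm2 x)^2 * norm12 (D - Dt) / lam)
        < kMargin lam k D x a) :
    norm0 (a - at') ≤ k := by
  obtain ⟨I, hIcard, hmargin_I⟩ := exists_card_eq_forall_lt_of_lt_kMargin hmargin
  refine (norm0_le_card_sub_card I fun j hj => ?_).trans (by rw [Fintype.card_fin, hIcard]; omega)
  have hperturb := abs_dot_col_residual_sub_le hlam hDt hclose ha hat j
  have ha_j : a j = 0 := by
    by_contra h
    linarith [ha.abs_dot_col_eq hlam.le h, hmargin_I j hj, (abs_nonneg _).trans hperturb]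
  have hat_j : at' j = 0 := by
    by_contra h
    linarith [hat.abs_dot_col_eq hlam.le h, hmargin_I j hj,
      (abs_sub_abs_le_abs_sub _ _).trans hperturb]
  simp [ha_j, hat_j]

/-- Preservation of sparsity. -/
theorem preservation_of_sparsity {d m : ℕ} (lam : ℝ) (hlam : 0 < lam) (k : ℕ)
    (D Dt : Matrix (Fin d) (Fin m) ℝ) (hD : IsDictionary D) (hDt : IsDictionary Dt)
    (hclose : norm12 (D - Dt) ≤ lam)
    (x : Fin d → ℝ)
    (a at' : Fin m → ℝ) (ha : IsLassoMin lam D x a) (hat : IsLassoMin lam Dt x at')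
    (hmargin : (1 + norm2 x / lam) * norm2 x * norm12 (D - Dt)
        + Real.sqrt (2 * (3 * (norm2 x)^2 + 9 * norm2 x + 2) * (norm2 x)^2 * norm12 (D - Dt) / lam)
        < kMargin lam k D x a) :
    norm0 (a - at') ≤ k :=
  preservation_of_sparsity_general lam hlam k D Dt hDt hclose x a at' ha hat hmargin
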